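/- arXiv:2502.08868 — 6 statements merged into one kernel-verified Lean document; each statement's English description precedes it below -/
import Mathlib

section
/- Let n = a + b + c where a, b, c are positive integers that are not all equal. Let A = {1,...,a}, B = {a+1,...,a+b}, C = {a+b+1,...,n}. Define an n×n array M by M[i,j] = A if i ∈ A and j ∈ A, M[i,j] = B if i ∈ B and j ∈ B, M[i,j] = C if i ∈ C and j ∈ C, and M[i,j] = ∅ otherwise. Then for any k ≥ 1 and any (n²,k)-array N, there exist indices i, j such that M[i,j] ∩ N[i,j] ≠ ∅. -/
/-- An (n²,k)-array: an n×n array of k-subsets of {1,…,n} (modelled as `Fin n`),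
such that every symbol occurs exactly k times among the entries in each row and
each column. -/
def IsArray2 (n k : ℕ) (A : Fin n → Fin n → Finset (Fin n)) : Prop :=
  (∀ i j, (A i j).card = k) ∧
  (∀ (i : Fin n) (s : Fin n), (Finset.univ.filter fun j => s ∈ A i j).card = k) ∧
  (∀ (j : Fin n) (s : Fin n), (Finset.univ.filter fun i => s ∈ A i j).card = k)
/-- The block A = {1,…,a} of symbols (0-indexed as values < a in `Fin n`). -/
def blkA (n a : ℕ) : Finset (Fin n) := Finset.univ.filter fun s => (s : ℕ) < a

/-- The block B = {a+1,…,a+b}. -/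
def blkB (n a b : ℕ) : Finset (Fin n) :=
  Finset.univ.filter fun s => a ≤ (s : ℕ) ∧ (s : ℕ) < a + b

/-- The block C = {a+b+1,…,n}. -/
def blkC (n a b : ℕ) : Finset (Fin n) := Finset.univ.filter fun s => a + b ≤ (s : ℕ)

/-- The block-diagonal (m,m,m)-array M: M[i,j] = A on A×A, B on B×B, C on C×C,
and ∅ otherwise. -/
def blkM (n a b : ℕ) (i j : Fin n) : Finset (Fin n) :=
  if (i : ℕ) < a ∧ (j : ℕ) < a then blkA n a
  else if (a ≤ (i : ℕ) ∧ (i : ℕ) < a + b) ∧ (a ≤ (j : ℕ) ∧ (j : ℕ) < a + b) then blkB n a b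
  else if a + b ≤ (i : ℕ) ∧ a + b ≤ (j : ℕ) then blkC n a b
  else ∅

/-! Classify the entries `(i, j, s)` of `N` (symbol `s` in cell `(i, j)`) by which of the block
coincidences `β i = β j`, `β i = β s`, `β j = β s` they satisfy, `β` being the block index.
Any two of these force all three, i.e. an entry lying in `M`, so when `N` avoids `M` the three
classes are disjoint. Counting by cells, rows and columns respectively, each class has
`k (a² + b² + c²)` elements, while there are `k n²` entries in all. Hence
`3 (a² + b² + c²) ≤ (a + b + c)²`, which forces `a = b = c`. -/

open Finset

theorem card_filter_comp_eq_mul_of_card_fiber {γ δ : Type*} [Fintype δ] [DecidableEq δ]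
    (T : Finset γ) (π : γ → δ) {k : ℕ} (hfib : ∀ d, #{x ∈ T | π x = d} = k)
    (P : δ → Prop) [DecidablePred P] :
    #{x ∈ T | P (π x)} = k * #{d | P d} := by
  rw [card_eq_sum_card_fiberwise (f := π) (t := {d | P d}) fun x hx => by simp_all]
  rw [sum_const_nat fun d hd => ?_, mul_comm]
  rw [filter_filter, ← hfib d]
  congr 1
  exact filter_congr fun x _ => ⟨And.right, fun h => ⟨h ▸ (mem_filter.1 hd).2, h⟩⟩

theorem card_filter_apply_eq_apply_eq_sum_sq {α ι : Type*} [Fintype α] [Fintype ι]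
    [DecidableEq ι] (β : α → ι) : #{p : α × α | β p.1 = β p.2} = ∑ c, #{x | β x = c} ^ 2 := by
  rw [card_eq_sum_card_fiberwise (f := fun p => β p.1) (t := univ) fun _ _ => mem_univ _]
  refine sum_congr rfl fun c _ => ?_
  rw [sq, ← card_product]
  congr 1
  ext ⟨x, y⟩
  simp only [mem_filter, mem_univ, true_and, mem_product]
  constructor
  · rintro ⟨h, rfl⟩; exact ⟨rfl, h.symm⟩
  · rintro ⟨rfl, h⟩; exact ⟨h.symm, rfl⟩

def arrayEntries {n : ℕ} (N : Fin n → Fin n → Finset (Fin n)) :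
    Finset (Fin n × Fin n × Fin n) :=
  {x | x.2.2 ∈ N x.1 x.2.1}

namespace IsArray2

variable {n k : ℕ} {N : Fin n → Fin n → Finset (Fin n)}

theorem card_arrayEntries_cell_fiber (hN : IsArray2 n k N) (d : Fin n × Fin n) :
    #{x ∈ arrayEntries N | (x.1, x.2.1) = d} = k := by
  obtain ⟨i, j⟩ := d
  have hfib : {x ∈ arrayEntries N | (x.1, x.2.1) = (i, j)} =
      (N i j).image fun s => (i, j, s) := by
    ext ⟨i', j', s'⟩
    simp only [arrayEntries, mem_filter, mem_univ, true_and, mem_image, Prod.mk.injEq]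
    aesop
  rw [hfib, card_image_of_injective _ fun _ _ h => by simpa using h, hN.1 i j]

theorem card_arrayEntries_row_fiber (hN : IsArray2 n k N) (d : Fin n × Fin n) :
    #{x ∈ arrayEntries N | (x.1, x.2.2) = d} = k := by
  obtain ⟨i, s⟩ := d
  have hfib : {x ∈ arrayEntries N | (x.1, x.2.2) = (i, s)} =
      ({j | s ∈ N i j} : Finset (Fin n)).image fun j => (i, j, s) := by
    ext ⟨i', j', s'⟩
    simp only [arrayEntries, mem_filter, mem_univ, true_and, mem_image, Prod.mk.injEq]
    aesop
  rw [hfib, card_image_of_injective _ fun _ _ h => by simpa using h, hN.2.1 i s]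

theorem card_arrayEntries_col_fiber (hN : IsArray2 n k N) (d : Fin n × Fin n) :
    #{x ∈ arrayEntries N | (x.2.1, x.2.2) = d} = k := by
  obtain ⟨j, s⟩ := d
  have hfib : {x ∈ arrayEntries N | (x.2.1, x.2.2) = (j, s)} =
      ({i | s ∈ N i j} : Finset (Fin n)).image fun i => (i, j, s) := by
    ext ⟨i', j', s'⟩
    simp only [arrayEntries, mem_filter, mem_univ, true_and, mem_image, Prod.mk.injEq]
    aesop
  rw [hfib, card_image_of_injective _ fun _ _ h => by simpa using h, hN.2.2 j s]

theorem three_mul_card_pairs_same_block_le {ι : Type*} [DecidableEq ι] (hN : IsArray2 n k N)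
    (hk : 0 < k) (β : Fin n → ι)
    (hβ : ∀ i j s, β i = β j → β s = β i → s ∉ N i j) :
    3 * #{p : Fin n × Fin n | β p.1 = β p.2} ≤ n * n := by
  have hclass := fun π hπ =>
    card_filter_comp_eq_mul_of_card_fiber (k := k) (arrayEntries N) π hπ
      fun p : Fin n × Fin n => β p.1 = β p.2
  set q := #{p : Fin n × Fin n | β p.1 = β p.2}
  have hpt : ∀ x ∈ arrayEntries N, ((if β x.1 = β x.2.1 then 1 else 0) +
      (if β x.1 = β x.2.2 then 1 else 0) + (if β x.2.1 = β x.2.2 then 1 else 0) : ℕ) ≤ 1 := by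
    rintro ⟨i, j, s⟩ hx
    have := hβ i j s
    simp only [arrayEntries, mem_filter, mem_univ, true_and] at hx
    split_ifs <;> simp_all
  have hT : #(arrayEntries N) = k * (n * n) := by
    simpa using
      card_filter_comp_eq_mul_of_card_fiber _ _ hN.card_arrayEntries_cell_fiber fun _ => True
  refine le_of_mul_le_mul_left ?_ hk
  calc k * (3 * q)
      = #{x ∈ arrayEntries N | β x.1 = β x.2.1} + #{x ∈ arrayEntries N | β x.1 = β x.2.2} +
          #{x ∈ arrayEntries N | β x.2.1 = β x.2.2} := by
        rw [hclass _ hN.card_arrayEntries_cell_fiber, hclass _ hN.card_arrayEntries_row_fiber,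
          hclass _ hN.card_arrayEntries_col_fiber]
        ring
    _ ≤ ∑ _x ∈ arrayEntries N, 1 := by
        simp only [card_filter, ← sum_add_distrib]
        exact sum_le_sum hpt
    _ = k * (n * n) := by rw [← card_eq_sum_ones, hT]

end IsArray2

theorem Fin.card_filter_le_val_lt {n l m : ℕ} (hlm : l ≤ m) (hm : m ≤ n) :
    #{i : Fin n | l ≤ (i : ℕ) ∧ (i : ℕ) < m} = m - l := by
  have h := card_filter_add_card_filter_not (s := {i : Fin n | (i : ℕ) < m})
    fun i : Fin n => l ≤ (i : ℕ)
  simp only [filter_filter, Fin.card_filter_val_lt, not_le] at h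
  have hl : ∀ i : Fin n, ((i : ℕ) < m ∧ (i : ℕ) < l) ↔ (i : ℕ) < l := fun i => by omega
  simp only [hl, and_comm (a := (_ : ℕ) < m), Fin.card_filter_val_lt] at h
  omega

def blockIndex (a b : ℕ) {n : ℕ} (i : Fin n) : Fin 3 :=
  if (i : ℕ) < a then 0 else if (i : ℕ) < a + b then 1 else 2

theorem mem_blkM_iff {n a b : ℕ} {i j s : Fin n} (hij : blockIndex a b i = blockIndex a b j) :
    s ∈ blkM n a b i j ↔ blockIndex a b s = blockIndex a b i := by
  unfold blockIndex at *
  simp only [blkM, blkA, blkB, blkC]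
  split_ifs at * <;> grind

theorem sum_sq_card_fiber_blockIndex {a b c n : ℕ} (hn : n = a + b + c) :
    ∑ p, #{i : Fin n | blockIndex a b i = p} ^ 2 = a ^ 2 + b ^ 2 + c ^ 2 := by
  have hfiber (p : Fin 3) (l m : ℕ)
      (hp : ∀ i : Fin n, blockIndex a b i = p ↔ l ≤ i ∧ i < m) :
      #{i : Fin n | blockIndex a b i = p} = #{i : Fin n | l ≤ (i : ℕ) ∧ (i : ℕ) < m} :=
    congrArg card (filter_congr fun i _ => hp i)
  have hblock (i : Fin n) : (blockIndex a b i = 0 ↔ 0 ≤ (i : ℕ) ∧ (i : ℕ) < a) ∧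
      (blockIndex a b i = 1 ↔ a ≤ (i : ℕ) ∧ (i : ℕ) < a + b) ∧
      (blockIndex a b i = 2 ↔ a + b ≤ (i : ℕ) ∧ (i : ℕ) < n) := by
    unfold blockIndex
    split_ifs <;> simp <;> omega
  rw [Fin.sum_univ_three, hfiber 0 0 a fun i => (hblock i).1,
    hfiber 1 a (a + b) fun i => (hblock i).2.1, hfiber 2 (a + b) n fun i => (hblock i).2.2,
    Fin.card_filter_le_val_lt (by omega) (by omega),
    Fin.card_filter_le_val_lt (by omega) (by omega), Fin.card_filter_le_val_lt (by omega) le_rfl,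
    Nat.sub_zero, Nat.add_sub_cancel_left, (by omega : n - (a + b) = c)]

theorem eq_and_eq_of_three_mul_sum_sq_le {a b c : ℕ}
    (h : 3 * (a ^ 2 + b ^ 2 + c ^ 2) ≤ (a + b + c) ^ 2) : a = b ∧ b = c := by
  zify at h
  constructor <;>
    nlinarith [sq_nonneg ((a : ℤ) - b), sq_nonneg ((b : ℤ) - c), sq_nonneg ((a : ℤ) - c)]

theorem stmt_0_general (a b c n : ℕ)
    (hne : ¬(a = b ∧ b = c)) (hn : n = a + b + c) (k : ℕ) (hk : 1 ≤ k)
    (N : Fin n → Fin n → Finset (Fin n)) (hN : IsArray2 n k N) :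
    ∃ i j : Fin n, (blkM n a b i j ∩ N i j).Nonempty := by
  by_contra! hcon
  have hsq := hN.three_mul_card_pairs_same_block_le hk (blockIndex a b) fun i j s hij hs hsN => by
    simpa [hcon i j] using mem_inter_of_mem ((mem_blkM_iff hij).2 hs) hsN
  rw [card_filter_apply_eq_apply_eq_sum_sq, sum_sq_card_fiber_blockIndex hn, hn, ← sq] at hsq
  exact hne (eq_and_eq_of_three_mul_sum_sq_le hsq)

/-- Theorem (unavoidable block-diagonal array): with n = a+b+c, a,b,c positive and
not all equal, for every k ≥ 1 and every (n²,k)-array N there are indices i, j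
with M[i,j] ∩ N[i,j] ≠ ∅. -/
theorem stmt_0 (a b c n : ℕ) (ha : 0 < a) (hb : 0 < b) (hc : 0 < c)
    (hne : ¬(a = b ∧ b = c)) (hn : n = a + b + c) (k : ℕ) (hk : 1 ≤ k)
    (N : Fin n → Fin n → Finset (Fin n)) (hN : IsArray2 n k N) :
    ∃ i j : Fin n, (blkM n a b i j ∩ N i j).Nonempty :=
  stmt_0_general a b c n hne hn k hk N hN
end

section
/- Let n = a + b + c with a, b, c positive integers, and let N be an (n²,k)-array (k ≥ 1) whose entries are disjoint from the block-diagonal array M defined by M[i,j] = A for (i,j) ∈ A×A, M[i,j] = B for (i,j) ∈ B×B, M[i,j] = C for (i,j) ∈ C×C, and ∅ otherwise, where A = {1,...,a}, B = {a+1,...,a+b}, C = {a+b+1,...,n}. Then the total contribution to the sum Σ|N[i,j]| over (i,j) ∈ (A×A) ∪ (B×B) ∪ (C×C) from symbols in A is at most a(nk − 2ak). -/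
/-- The diagonal region (A×A) ∪ (B×B) ∪ (C×C). -/
def onDiag (a b : ℕ) {n : ℕ} (i j : Fin n) : Prop :=
  ((i : ℕ) < a ∧ (j : ℕ) < a) ∨
  ((a ≤ (i : ℕ) ∧ (i : ℕ) < a + b) ∧ (a ≤ (j : ℕ) ∧ (j : ℕ) < a + b)) ∨
  (a + b ≤ (i : ℕ) ∧ a + b ≤ (j : ℕ))

instance (a b : ℕ) {n : ℕ} (i j : Fin n) : Decidable (onDiag a b i j) := by
  unfold onDiag; infer_instance

open Finset

theorem sum_card_filter_compl_compl_add {ι α : Type*} [Fintype ι] [DecidableEq ι]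
    [DecidableEq α] (N : ι → ι → Finset α) (S : Finset ι) (s : α) {k : ℕ}
    (hrow : ∀ i, #{j | s ∈ N i j} = k) (hcol : ∀ j, #{i | s ∈ N i j} = k)
    (hS : ∀ i ∈ S, ∀ j ∈ S, s ∉ N i j) :
    ∑ i ∈ Sᶜ, #{j ∈ Sᶜ | s ∈ N i j} + 2 * #S * k = Fintype.card ι * k := by
  have hsplit : ∀ i, #{j ∈ S | s ∈ N i j} + #{j ∈ Sᶜ | s ∈ N i j} = k := fun i => by
    rw [← hrow i, ← card_union_of_disjoint (disjoint_filter_filter disjoint_compl_right),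
      ← filter_union, union_compl]
  have hcross : ∑ i ∈ Sᶜ, #{j ∈ S | s ∈ N i j} = #S * k := by
    simp only [card_filter]
    rw [sum_comm, ← smul_eq_mul, ← sum_const]
    refine sum_congr rfl fun j hj => ?_
    rw [← hcol j, card_filter, ← sum_compl_add_sum S,
      sum_eq_zero fun i hi => if_neg (hS i hi j hj), add_zero]
  calc ∑ i ∈ Sᶜ, #{j ∈ Sᶜ | s ∈ N i j} + 2 * #S * k
      = ∑ i ∈ Sᶜ, (#{j ∈ S | s ∈ N i j} + #{j ∈ Sᶜ | s ∈ N i j}) + ∑ i ∈ S, k := by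
        rw [sum_add_distrib, hcross, sum_const, smul_eq_mul]; ring
    _ = Fintype.card ι * k := by
        rw [sum_congr rfl fun i _ => hsplit i, sum_compl_add_sum, sum_const, card_univ,
          smul_eq_mul]

theorem sum_ite_card_inter_eq_sum_card_filter {ι α : Type*} [Fintype ι] [DecidableEq α]
    (P : ι → ι → Prop) [∀ i j, Decidable (P i j)] (N : ι → ι → Finset α) (T : Finset α) :
    ∑ i, ∑ j, (if P i j then #(N i j ∩ T) else 0) = ∑ s ∈ T, ∑ i, #{j | P i j ∧ s ∈ N i j} := by
  have hcell : ∀ i j, (if P i j then #(N i j ∩ T) else 0) =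
      ∑ s ∈ T, if P i j ∧ s ∈ N i j then (1 : ℕ) else 0 := fun i j => by
    split_ifs with hP
    · simp only [hP, true_and, ← card_filter, inter_comm, filter_mem_eq_inter]
    · simp [hP]
  simp only [hcell, card_filter]
  exact (sum_congr rfl fun _ _ => sum_comm).trans sum_comm

theorem card_blkA {n a : ℕ} (h : a ≤ n) : #(blkA n a) = a := by
  rw [blkA, Fin.card_filter_val_lt, min_eq_right h]

theorem mem_blkA {n a : ℕ} {s : Fin n} : s ∈ blkA n a ↔ (s : ℕ) < a := by
  simp [blkA]

theorem onDiag.lt_iff {a b n : ℕ} {i j : Fin n} (h : onDiag a b i j) :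
    (i : ℕ) < a ↔ (j : ℕ) < a := by
  unfold onDiag at h; omega

theorem notMem_of_blkM_inter_eq_empty {n a b : ℕ} {N : Fin n → Fin n → Finset (Fin n)}
    (hdisj : ∀ i j : Fin n, blkM n a b i j ∩ N i j = ∅) {s : Fin n} (hs : s ∈ blkA n a) :
    ∀ i ∈ blkA n a, ∀ j ∈ blkA n a, s ∉ N i j := by
  intro i hi j hj hmem
  have hM : blkM n a b i j = blkA n a := if_pos ⟨mem_blkA.1 hi, mem_blkA.1 hj⟩
  simpa [hdisj i j] using (mem_inter.2 ⟨hM ▸ hs, hmem⟩ : s ∈ blkM n a b i j ∩ N i j)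

theorem sum_card_onDiag_le {n a b : ℕ} (N : Fin n → Fin n → Finset (Fin n)) (s : Fin n)
    (hA : ∀ i ∈ blkA n a, ∀ j ∈ blkA n a, s ∉ N i j) :
    ∑ i, #{j | onDiag a b i j ∧ s ∈ N i j} ≤
      ∑ i ∈ (blkA n a)ᶜ, #{j ∈ (blkA n a)ᶜ | s ∈ N i j} := by
  calc ∑ i, #{j | onDiag a b i j ∧ s ∈ N i j}
      = ∑ i ∈ (blkA n a)ᶜ, #{j | onDiag a b i j ∧ s ∈ N i j} := by
        refine (sum_subset (subset_univ _) fun i _ hi => ?_).symm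
        rw [notMem_compl] at hi
        refine card_eq_zero.2 (filter_eq_empty_iff.2 fun j _ ⟨hD, hs⟩ => hA i hi j ?_ hs)
        exact mem_blkA.2 (hD.lt_iff.1 (mem_blkA.1 hi))
    _ ≤ ∑ i ∈ (blkA n a)ᶜ, #{j ∈ (blkA n a)ᶜ | s ∈ N i j} := by
        refine sum_le_sum fun i hi => card_le_card fun j => ?_
        simp only [mem_filter, mem_univ, true_and, mem_compl, mem_blkA] at hi ⊢
        exact fun ⟨hD, hs⟩ => ⟨fun hj => hi (hD.lt_iff.2 hj), hs⟩

theorem stmt_2_general (a b c n : ℕ) (hn : n = a + b + c) (k : ℕ)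
    (N : Fin n → Fin n → Finset (Fin n)) (hN : IsArray2 n k N)
    (hdisj : ∀ i j : Fin n, blkM n a b i j ∩ N i j = ∅) :
    (∑ i : Fin n, ∑ j : Fin n,
        if onDiag a b i j then ((N i j ∩ blkA n a).card : ℤ) else 0) ≤
      (a : ℤ) * ((n : ℤ) * (k : ℤ) - 2 * (a : ℤ) * (k : ℤ)) := by
  obtain ⟨-, hrow, hcol⟩ := hN
  have hA : #(blkA n a) = a := card_blkA (by omega)
  have hsymbol : ∀ s ∈ blkA n a,
      ((∑ i, #{j | onDiag a b i j ∧ s ∈ N i j} : ℕ) : ℤ) ≤ n * k - 2 * a * k := by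
    intro s hs
    have hfree := notMem_of_blkM_inter_eq_empty hdisj hs
    have hoff := sum_card_filter_compl_compl_add N (blkA n a) s (hrow · s) (hcol · s) hfree
    have hdiag := sum_card_onDiag_le (b := b) N s hfree
    rw [hA, Fintype.card_fin] at hoff
    have hcount : ∑ i, #{j | onDiag a b i j ∧ s ∈ N i j} + 2 * a * k ≤ n * k := by omega
    rw [le_sub_iff_add_le]
    exact_mod_cast hcount
  calc (∑ i : Fin n, ∑ j : Fin n,
        if onDiag a b i j then ((N i j ∩ blkA n a).card : ℤ) else 0)
      = ∑ s ∈ blkA n a, ((∑ i, #{j | onDiag a b i j ∧ s ∈ N i j} : ℕ) : ℤ) := by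
        exact_mod_cast sum_ite_card_inter_eq_sum_card_filter (onDiag a b) N (blkA n a)
    _ ≤ ∑ _s ∈ blkA n a, ((n : ℤ) * k - 2 * a * k) := sum_le_sum hsymbol
    _ = (a : ℤ) * ((n : ℤ) * (k : ℤ) - 2 * (a : ℤ) * (k : ℤ)) := by
        rw [sum_const, hA, nsmul_eq_mul]

/-- If the (n²,k)-array N is disjoint from the block-diagonal array M, then the
contribution from symbols in A to Σ |N[i,j]| over the diagonal blocks is at most
a(nk − 2ak). -/
theorem stmt_2 (a b c n : ℕ) (ha : 0 < a) (hb : 0 < b) (hc : 0 < c)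
    (hn : n = a + b + c) (k : ℕ) (hk : 1 ≤ k)
    (N : Fin n → Fin n → Finset (Fin n)) (hN : IsArray2 n k N)
    (hdisj : ∀ i j : Fin n, blkM n a b i j ∩ N i j = ∅) :
    (∑ i : Fin n, ∑ j : Fin n,
        if onDiag a b i j then ((N i j ∩ blkA n a).card : ℤ) else 0) ≤
      (a : ℤ) * ((n : ℤ) * (k : ℤ) - 2 * (a : ℤ) * (k : ℤ)) :=
  stmt_2_general a b c n hn k N hN hdisj
end

section
/- If d' > d ≥ 3 and there exists a nonextendible Latin hypercuboid in LHC(d,n,k), then there exists a nonextendible Latin hypercuboid in LHC(d',n,k). Consequently NE(d',n) ≤ NE(d,n). -/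
/-- A Latin hypercuboid in LHC(D+1, n, k): a D-dimensional n×⋯×n array of
columns of length k (so a (D+1)-dimensional n×⋯×n×k array), with entries in a
symbol set `α` (normally `Fin n`), such that each symbol occurs at most once in
each axis-parallel line: the entries along each column (last axis) are distinct,
and for each fixed layer ℓ and each axis t, the entries along any line in
direction t are distinct. -/
def IsLHC (D n k : ℕ) {α : Type} (H : (Fin D → Fin n) → Fin k → α) : Prop :=
  (∀ x, Function.Injective (H x)) ∧
  ∀ (t : Fin D) (x : Fin D → Fin n) (ℓ : Fin k) (v w : Fin n),
    H (Function.update x t v) ℓ = H (Function.update x t w) ℓ → v = w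

/-- H ∈ LHC(D+1,n,k) is extendible if it is contained in a member of
LHC(D+1,n,k+1). -/
def Extendible (D n k : ℕ) (H : (Fin D → Fin n) → Fin k → Fin n) : Prop :=
  ∃ H' : (Fin D → Fin n) → Fin (k + 1) → Fin n,
    IsLHC D n (k + 1) H' ∧ ∀ (x : Fin D → Fin n) (ℓ : Fin k), H' x ℓ.castSucc = H x ℓ

/-- H ∈ LHC(D+1,n,k) is completable if it is contained in a Latin hypercube,
i.e. a member of LHC(D+1,n,n). -/
def Completable (D n k : ℕ) (H : (Fin D → Fin n) → Fin k → Fin n) : Prop :=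
  ∃ L : (Fin D → Fin n) → Fin n → Fin n,
    IsLHC D n n L ∧
      ∀ (x : Fin D → Fin n) (ℓ : Fin k) (hℓ : (ℓ : ℕ) < n), L x ⟨ℓ, hℓ⟩ = H x ℓ

/-- The array of unused symbols of each line of H along the last axis. -/
def UH (D n k : ℕ) (H : (Fin D → Fin n) → Fin k → Fin n) :
    (Fin D → Fin n) → Finset (Fin n) :=
  fun x => Finset.univ \ Finset.image (H x) Finset.univ
/-- NE(d,n): the smallest k for which a nonextendible member of LHC(d,n,k)
exists (⊤ if there is none). -/
noncomputable def NE (d n : ℕ) : ℕ∞ :=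
  sInf ((fun k : ℕ => (k : ℕ∞)) ''
    {k : ℕ | ∃ H : (Fin (d - 1) → Fin n) → Fin k → Fin n,
      IsLHC (d - 1) n k H ∧ ¬ Extendible (d - 1) n k H})

/-!
Adding a new first coordinate and setting `I x = x₀ + H (tail x)` keeps every line Latin:
along the new axis `I` is a translate of the identity, along the old axes it is a translate
of a line of `H`. An extension `I'` of `I` restricts on the slice `x₀ = 0` to an extension of
`H`, so nonextendibility survives; iterating reaches any larger dimension. For `n = 0` every
hypercuboid of positive dimension is empty, hence extendible.
-/

section

variable {D n k : ℕ}

def liftLHC (H : (Fin D → Fin n) → Fin k → Fin n) : (Fin (D + 1) → Fin n) → Fin k → Fin n :=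
  fun x ℓ => x 0 + H (Fin.tail x) ℓ

lemma IsLHC.liftLHC {H : (Fin D → Fin n) → Fin k → Fin n} (hH : IsLHC D n k H) :
    IsLHC (D + 1) n k (liftLHC H) := by
  refine ⟨fun x _ _ h => hH.1 (Fin.tail x) (add_left_cancel h), fun t x ℓ v w h => ?_⟩
  induction t using Fin.cases with
  | zero =>
    simpa only [_root_.liftLHC, Function.update_self, Fin.tail_update_zero, add_left_inj]
      using h
  | succ j =>
    simp only [_root_.liftLHC, Function.update_of_ne (Fin.succ_ne_zero j).symm,
      Fin.tail_update_succ, add_right_inj] at h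
    exact hH.2 j (Fin.tail x) ℓ v w h

lemma Extendible.of_liftLHC [NeZero n] {H : (Fin D → Fin n) → Fin k → Fin n}
    (hI : Extendible (D + 1) n k (liftLHC H)) : Extendible D n k H := by
  obtain ⟨I', hI', hrestrict⟩ := hI
  refine ⟨fun y => I' (Fin.cons 0 y), ⟨fun y => hI'.1 _, fun t y ℓ v w h => ?_⟩, fun y ℓ => ?_⟩
  · simp only [Fin.cons_update] at h
    exact hI'.2 t.succ _ ℓ v w h
  · simp [hrestrict, _root_.liftLHC]

lemma exists_nonextendible_of_le [NeZero n] {D' : ℕ} (hD : D ≤ D')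
    (h : ∃ H : (Fin D → Fin n) → Fin k → Fin n, IsLHC D n k H ∧ ¬ Extendible D n k H) :
    ∃ H : (Fin D' → Fin n) → Fin k → Fin n, IsLHC D' n k H ∧ ¬ Extendible D' n k H := by
  induction D', hD using Nat.le_induction with
  | base => exact h
  | succ D' _ ih =>
    obtain ⟨H, hH, hne⟩ := ih
    exact ⟨liftLHC H, hH.liftLHC, fun hI => hne hI.of_liftLHC⟩

lemma extendible_of_isEmpty [IsEmpty (Fin D → Fin n)] (H : (Fin D → Fin n) → Fin k → Fin n) :
    Extendible D n k H :=
  ⟨isEmptyElim, ⟨isEmptyElim, fun _ x => isEmptyElim x⟩, isEmptyElim⟩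

end

/-- If d' > d ≥ 3 and a nonextendible Latin hypercuboid exists in LHC(d,n,k),
then one exists in LHC(d',n,k); consequently NE(d',n) ≤ NE(d,n). -/
theorem stmt_4 (d d' n : ℕ) (hd : 3 ≤ d) (hdd : d < d') :
    (∀ k : ℕ,
      (∃ H : (Fin (d - 1) → Fin n) → Fin k → Fin n,
          IsLHC (d - 1) n k H ∧ ¬ Extendible (d - 1) n k H) →
      ∃ H' : (Fin (d' - 1) → Fin n) → Fin k → Fin n,
          IsLHC (d' - 1) n k H' ∧ ¬ Extendible (d' - 1) n k H') ∧
    NE d' n ≤ NE d n := by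
  have lift : ∀ k : ℕ,
      (∃ H : (Fin (d - 1) → Fin n) → Fin k → Fin n,
          IsLHC (d - 1) n k H ∧ ¬ Extendible (d - 1) n k H) →
      ∃ H' : (Fin (d' - 1) → Fin n) → Fin k → Fin n,
          IsLHC (d' - 1) n k H' ∧ ¬ Extendible (d' - 1) n k H' := by
    intro k h
    rcases Nat.eq_zero_or_pos n with rfl | hn
    · obtain ⟨H, -, hne⟩ := h
      have : IsEmpty (Fin (d - 1) → Fin 0) := ⟨fun x => (x ⟨0, by omega⟩).elim0⟩
      exact (hne (extendible_of_isEmpty H)).elim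
    · have : NeZero n := ⟨hn.ne'⟩
      exact exists_nonextendible_of_le (by omega) h
  exact ⟨lift, sInf_le_sInf (Set.image_mono lift)⟩
end

section
/- If d' > d ≥ 3 and there exists a noncompletable Latin hypercuboid in LHC(d,n,k), then there exists a noncompletable Latin hypercuboid in LHC(d',n,k). Consequently NC(d',n) ≤ NC(d,n). -/
/-- NC(d,n): the smallest k for which a noncompletable member of LHC(d,n,k)
exists (⊤ if there is none). -/
noncomputable def NC (d n : ℕ) : ℕ∞ :=
  sInf ((fun k : ℕ => (k : ℕ∞)) ''
    {k : ℕ | ∃ H : (Fin (d - 1) → Fin n) → Fin k → Fin n,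
      IsLHC (d - 1) n k H ∧ ¬ Completable (d - 1) n k H})

/-! Stacking `n` copies of a Latin hypercuboid along a new axis, with the symbols of the `a`-th
copy shifted by `a` in `ℤ/n`, gives a Latin hypercuboid of one dimension more; its slice at `a = 0`
is the original, and a slice of a Latin hypercube is a Latin hypercube, so noncompletability is
inherited. Iterating this reaches every higher dimension. -/

section Stacking

variable {D n k : ℕ}

def shiftStack (H : (Fin D → Fin n) → Fin k → Fin n) : (Fin (D + 1) → Fin n) → Fin k → Fin n :=
  fun x ℓ => H (Fin.init x) ℓ + x (Fin.last D)

theorem IsLHC.shiftStack {H : (Fin D → Fin n) → Fin k → Fin n} (hH : IsLHC D n k H) :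
    IsLHC (D + 1) n k (shiftStack H) := by
  refine ⟨fun x ℓ₁ ℓ₂ h => hH.1 (Fin.init x) (add_right_cancel h), fun t x ℓ v w h => ?_⟩
  induction t using Fin.lastCases with
  | last =>
    simp only [_root_.shiftStack, Fin.init_update_last, Function.update_self] at h
    exact add_left_cancel h
  | cast i =>
    simp only [_root_.shiftStack, Fin.init_update_castSucc,
      Function.update_of_ne (Fin.castSucc_lt_last i).ne'] at h
    exact hH.2 i (Fin.init x) ℓ v w (add_right_cancel h)

theorem IsLHC.snoc_slice {α : Type} {L : (Fin (D + 1) → Fin n) → Fin k → α}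
    (hL : IsLHC (D + 1) n k L) (a : Fin n) : IsLHC D n k (fun x => L (Fin.snoc x a)) :=
  ⟨fun x => hL.1 _, fun t x ℓ v w h => hL.2 t.castSucc (Fin.snoc x a) ℓ v w <| by
    simpa only [Fin.snoc_update] using h⟩

theorem completable_of_fin_zero (H : (Fin D → Fin 0) → Fin k → Fin 0) : Completable D 0 k H :=
  ⟨fun _ m => m.elim0, ⟨fun _ => Function.injective_of_subsingleton _, fun _ _ m => m.elim0⟩,
    fun _ ℓ hℓ => absurd hℓ (Nat.not_lt_zero ℓ)⟩

theorem Completable.of_shiftStack [NeZero n] {H : (Fin D → Fin n) → Fin k → Fin n}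
    (h : Completable (D + 1) n k (shiftStack H)) : Completable D n k H := by
  obtain ⟨L, hL, hLH⟩ := h
  refine ⟨fun x => L (Fin.snoc x 0), hL.snoc_slice 0, fun x ℓ hℓ => ?_⟩
  simpa only [_root_.shiftStack, Fin.init_snoc, Fin.snoc_last, add_zero] using
    hLH (Fin.snoc x 0) ℓ hℓ

theorem exists_noncompletable_succ
    (h : ∃ H : (Fin D → Fin n) → Fin k → Fin n, IsLHC D n k H ∧ ¬ Completable D n k H) :
    ∃ H : (Fin (D + 1) → Fin n) → Fin k → Fin n,
      IsLHC (D + 1) n k H ∧ ¬ Completable (D + 1) n k H := by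
  obtain ⟨H, hH, hnc⟩ := h
  obtain rfl | hn := eq_or_ne n 0
  · exact absurd (completable_of_fin_zero H) hnc
  have : NeZero n := ⟨hn⟩
  exact ⟨shiftStack H, hH.shiftStack, fun hc => hnc hc.of_shiftStack⟩

end Stacking

theorem exists_noncompletable_of_le {D D' n k : ℕ} (hDD : D ≤ D')
    (h : ∃ H : (Fin D → Fin n) → Fin k → Fin n, IsLHC D n k H ∧ ¬ Completable D n k H) :
    ∃ H : (Fin D' → Fin n) → Fin k → Fin n, IsLHC D' n k H ∧ ¬ Completable D' n k H := by
  induction D', hDD using Nat.le_induction with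
  | base => exact h
  | succ D' _ ih => exact exists_noncompletable_succ ih

theorem NC_le_NC_of_le {d d' : ℕ} (n : ℕ) (hdd : d ≤ d') : NC d' n ≤ NC d n :=
  sInf_le_sInf <| Set.image_mono fun _ => exists_noncompletable_of_le (by omega)

theorem stmt_5_general (d d' n : ℕ) (hdd : d < d') :
    (∀ k : ℕ,
      (∃ H : (Fin (d - 1) → Fin n) → Fin k → Fin n,
          IsLHC (d - 1) n k H ∧ ¬ Completable (d - 1) n k H) →
      ∃ H' : (Fin (d' - 1) → Fin n) → Fin k → Fin n,
          IsLHC (d' - 1) n k H' ∧ ¬ Completable (d' - 1) n k H') ∧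
    NC d' n ≤ NC d n :=
  ⟨fun _ => exists_noncompletable_of_le (by omega), NC_le_NC_of_le n hdd.le⟩

/-- If d' > d ≥ 3 and a noncompletable Latin hypercuboid exists in LHC(d,n,k),
then one exists in LHC(d',n,k); consequently NC(d',n) ≤ NC(d,n). -/
theorem stmt_5 (d d' n : ℕ) (hd : 3 ≤ d) (hdd : d < d') :
    (∀ k : ℕ,
      (∃ H : (Fin (d - 1) → Fin n) → Fin k → Fin n,
          IsLHC (d - 1) n k H ∧ ¬ Completable (d - 1) n k H) →
      ∃ H' : (Fin (d' - 1) → Fin n) → Fin k → Fin n,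
          IsLHC (d' - 1) n k H' ∧ ¬ Completable (d' - 1) n k H') ∧
    NC d' n ≤ NC d n :=
  stmt_5_general d d' n hdd
end

section
/- Every Latin hypercuboid in LHC(d,n,n−1) is completable to a Latin hypercube of order n and dimension d. -/
/-! With `n - 1` layers, each column misses exactly one symbol, and these missing symbols form the
last layer. It is Latin along every line: if the missing symbols along a line avoided some
symbol `s`, then `s` would occur in all `n` columns of that line, hence, by pigeonhole, twice
in one of the `n - 1` layers. -/

open Function

theorem Function.Injective.exists_compl_range_eq_singleton {ι α : Type*} [Finite ι] [Finite α]
    {f : ι → α} (hf : Injective f) (hcard : Nat.card α = Nat.card ι + 1) :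
    ∃ a, (Set.range f)ᶜ = {a} := by
  rw [← Set.ncard_eq_one]
  exact Set.ncard_compl_of_ncard_eq_add _
    (by rw [Set.ncard_range_of_injective hf, hcard, add_comm])

theorem injective_of_compl_range_subset_singleton {β κ α : Type*}
    [Fintype β] [Fintype κ] [Fintype α]
    {G : β → κ → α} {m : β → α} (hcard : Fintype.card β = Fintype.card α)
    (hκ : Fintype.card κ < Fintype.card β) (hlayer : ∀ ℓ, Injective (G · ℓ))
    (hm : ∀ v, (Set.range (G v))ᶜ ⊆ {m v}) : Injective m := by
  suffices hsurj : Surjective m from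
    ((Fintype.bijective_iff_surjective_and_card m).mpr ⟨hsurj, hcard⟩).1
  intro s
  by_contra! hs
  choose f hf using fun v => not_not.mp fun hv => hs v (hm v hv).symm
  obtain ⟨v, w, hvw, hfvw⟩ := Fintype.exists_ne_map_eq_of_card_lt f hκ
  exact hvw (hlayer (f v) (show G v (f v) = G w (f v) by rw [hf v, hfvw, hf w]))

theorem IsLHC.snoc {D n k : ℕ} {α : Type} {H : (Fin D → Fin n) → Fin k → α}
    {M : (Fin D → Fin n) → α} (hH : IsLHC D n k H) (hM : ∀ x, M x ∉ Set.range (H x))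
    (hMline : ∀ t x v w, M (update x t v) = M (update x t w) → v = w) :
    IsLHC D n (k + 1) (fun x => Fin.snoc (H x) (M x)) := by
  refine ⟨fun x => Fin.snoc_injective_iff.mpr ⟨hH.1 x, hM x⟩, fun t x ℓ v w => ?_⟩
  induction ℓ using Fin.lastCases with
  | last => simpa only [Fin.snoc_last] using hMline t x v w
  | cast ℓ => simpa only [Fin.snoc_castSucc] using hH.2 t x ℓ v w

theorem IsLHC.extendible_of_succ_eq {D n k : ℕ} {H : (Fin D → Fin n) → Fin k → Fin n}
    (hH : IsLHC D n k H) (hk : k + 1 = n) : Extendible D n k H := by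
  choose M hM using fun x => (hH.1 x).exists_compl_range_eq_singleton (by simp [hk])
  have hMline : ∀ t x v w, M (update x t v) = M (update x t w) → v = w := fun t x =>
    injective_of_compl_range_subset_singleton (G := fun v => H (update x t v))
      (by simp) (by simp [← hk]) (hH.2 t x) fun v => (hM _).le
  refine ⟨_, hH.snoc (fun x => ?_) hMline, fun x ℓ => Fin.snoc_castSucc ..⟩
  rw [← Set.mem_compl_iff, hM x]
  exact Set.mem_singleton _

theorem Extendible.completable_of_succ_eq {D n k : ℕ} {H : (Fin D → Fin n) → Fin k → Fin n}
    (hH : Extendible D n k H) (hk : k + 1 = n) : Completable D n k H := by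
  subst hk
  obtain ⟨L, hL, hLH⟩ := hH
  exact ⟨L, hL, fun x ℓ _ => hLH x ℓ⟩

/-- Every Latin hypercuboid in LHC(d,n,n−1) is completable to a Latin hypercube
of order n and dimension d. (Here d = D+1.) -/
theorem stmt_7 (D n : ℕ) (H : (Fin D → Fin n) → Fin (n - 1) → Fin n)
    (hH : IsLHC D n (n - 1) H) : Completable D n (n - 1) H := by
  rcases Nat.eq_zero_or_pos n with rfl | hn
  · exact ⟨fun _ ℓ => ℓ, ⟨fun _ => injective_id, fun _ _ ℓ => ℓ.elim0⟩,
      fun _ ℓ => ℓ.elim0⟩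
  have hk : n - 1 + 1 = n := Nat.sub_add_cancel hn
  exact (hH.extendible_of_succ_eq hk).completable_of_succ_eq hk
end

section
/- Let n = a+b+c with a,b,c positive integers not all equal, and let M be the block-diagonal array with M[i,j] = A on A×A, B on B×B, C on C×C and ∅ elsewhere (A, B, C the consecutive intervals of sizes a, b, c partitioning {1,...,n}). Then M cannot be embedded in an (n², n−k)-array for any k ≥ 1; that is, there is no (n², n−k)-array P with M[i,j] ⊆ P[i,j] for all i,j. -/
/-!
Passing to the complement of `P`, it suffices that no `(n², k)`-array `N` with `k ≥ 1` avoids `M`,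
i.e. has no symbol `s ∈ N[i,j]` with `s`, `i`, `j` in the same block. Weight the block indices
`0 < 1 < 2` by `ω(p, q) = 1` if `p ≤ q` and `-2` otherwise, and sum `ω(i, s) + ω(s, j) + ω(j, i)`
(on block indices) over all triples with `s ∈ N[i,j]`. As `x ≤ y ≤ z ≤ x` forces `x = y = z`, every
triple avoiding `M` contributes at most `0`. But since each symbol occurs `k` times in each row and
column and each cell holds `k` symbols, each of the three terms sums to
`k (a² + b² + c² - ab - bc - ca)`, which is positive unless `a = b = c`.
-/

open Finset

theorem sum_sum_mem_eq_sum_card_filter_nsmul {ι α β : Type*} [Fintype ι] [Fintype α]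
    [DecidableEq α] [AddCommMonoid β] (N : ι → Finset α) (g : α → β) :
    ∑ j, ∑ s ∈ N j, g s = ∑ s, #{j | s ∈ N j} • g s := by
  rw [Finset.sum_comm' (t' := univ) (s' := fun s => {j | s ∈ N j}) (by simp)]
  simp only [sum_const]

namespace IsArray2

variable {n k : ℕ} {N : Fin n → Fin n → Finset (Fin n)}

theorem compl (hN : IsArray2 n k N) : IsArray2 n (n - k) fun i j => (N i j)ᶜ := by
  obtain ⟨hcard, hrow, hcol⟩ := hN
  refine ⟨fun i j => by simp [card_compl, hcard], fun i s => ?_, fun j s => ?_⟩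
  · simp only [mem_compl, ← compl_filter, card_compl, Fintype.card_fin, hrow]
  · simp only [mem_compl, ← compl_filter, card_compl, Fintype.card_fin, hcol]

variable {β : Type*} [AddCommMonoid β]

theorem sum_weight_row_symbol (hN : IsArray2 n k N) (f : Fin n → Fin n → β) :
    ∑ i, ∑ j, ∑ s ∈ N i j, f i s = k • ∑ i, ∑ s, f i s := by
  simp only [sum_sum_mem_eq_sum_card_filter_nsmul, hN.2.1, smul_sum]

theorem sum_weight_symbol_col (hN : IsArray2 n k N) (f : Fin n → Fin n → β) :
    ∑ i, ∑ j, ∑ s ∈ N i j, f s j = k • ∑ j, ∑ s, f s j := by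
  rw [sum_comm]
  simp only [sum_sum_mem_eq_sum_card_filter_nsmul, hN.2.2, smul_sum]

theorem sum_weight_col_row (hN : IsArray2 n k N) (f : Fin n → Fin n → β) :
    ∑ i, ∑ j, ∑ _s ∈ N i j, f j i = k • ∑ j, ∑ i, f j i := by
  rw [sum_comm]
  simp only [sum_const, hN.1, smul_sum]

end IsArray2

def blockIdx (a b x : ℕ) : ℕ := if x < a then 0 else if x < a + b then 1 else 2

theorem sum_blockIdx {β : Type*} [AddCommMonoid β] (a b c : ℕ) (g : ℕ → β) :
    ∑ x : Fin (a + b + c), g (blockIdx a b x) = a • g 0 + b • g 1 + c • g 2 := by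
  rw [Fin.sum_univ_eq_sum_range (fun x => g (blockIdx a b x)), sum_range_add, sum_range_add]
  have h0 : ∀ x ∈ range a, g (blockIdx a b x) = g 0 := fun x hx => by
    simp [blockIdx, mem_range.1 hx]
  have h1 : ∀ x ∈ range b, g (blockIdx a b (a + x)) = g 1 := fun x hx => by
    simp [blockIdx, mem_range.1 hx]
  have h2 : ∀ x ∈ range c, g (blockIdx a b (a + b + x)) = g 2 := fun x _ => by
    simp [blockIdx, add_assoc]
  simp [sum_congr rfl h0, sum_congr rfl h1, sum_congr rfl h2]

theorem mem_blkM_of_blockIdx_eq {n a b : ℕ} {i j s : Fin n}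
    (hsi : blockIdx a b s = blockIdx a b i) (hij : blockIdx a b i = blockIdx a b j) :
    s ∈ blkM n a b i j := by
  unfold blockIdx at hsi hij
  unfold blkM blkA blkB blkC
  split_ifs at hsi hij ⊢ <;> (try simp only [mem_filter, mem_univ, true_and]) <;> omega

def orderWeight (p q : ℕ) : ℤ := if p ≤ q then 1 else -2

theorem orderWeight_cyclic_nonpos {x y z : ℕ} (h : ¬(x = y ∧ y = z)) :
    orderWeight x y + orderWeight y z + orderWeight z x ≤ 0 := by
  unfold orderWeight; split_ifs <;> omega

theorem sum_orderWeight_blockIdx (a b c : ℕ) :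
    ∑ p : Fin (a + b + c), ∑ q : Fin (a + b + c), orderWeight (blockIdx a b p) (blockIdx a b q)
      = a ^ 2 + b ^ 2 + c ^ 2 - (a * b + b * c + c * a) := by
  rw [sum_congr rfl fun (p : Fin (a + b + c)) _ =>
      sum_blockIdx a b c (orderWeight (blockIdx a b p)),
    sum_blockIdx a b c fun x => a • orderWeight x 0 + b • orderWeight x 1 + c • orderWeight x 2]
  simp [orderWeight]
  ring

theorem sq_add_sq_add_sq_sub_pos {a b c : ℤ} (h : ¬(a = b ∧ b = c)) :
    0 < a ^ 2 + b ^ 2 + c ^ 2 - (a * b + b * c + c * a) := by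
  have : 0 < (a - b) ^ 2 + (b - c) ^ 2 := by
    rcases not_and_or.1 h with h | h
    · exact add_pos_of_pos_of_nonneg (sq_pos_iff.2 (sub_ne_zero.2 h)) (sq_nonneg _)
    · exact add_pos_of_nonneg_of_pos (sq_nonneg _) (sq_pos_iff.2 (sub_ne_zero.2 h))
  nlinarith [sq_nonneg (c - a)]

theorem eq_and_eq_of_isArray2_disjoint_blkM {a b c k : ℕ}
    {N : Fin (a + b + c) → Fin (a + b + c) → Finset (Fin (a + b + c))}
    (hN : IsArray2 (a + b + c) k N) (hk : 0 < k)
    (hdisj : ∀ i j, Disjoint (blkM (a + b + c) a b i j) (N i j)) : a = b ∧ b = c := by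
  by_contra hne
  set cls : Fin (a + b + c) → ℕ := fun x => blockIdx a b x
  set E : ℤ := a ^ 2 + b ^ 2 + c ^ 2 - (a * b + b * c + c * a)
  have hE : ∑ p, ∑ q, orderWeight (cls p) (cls q) = E := sum_orderWeight_blockIdx a b c
  have hnonpos : ∑ i, ∑ j, ∑ s ∈ N i j,
      (orderWeight (cls i) (cls s) + orderWeight (cls s) (cls j) + orderWeight (cls j) (cls i))
        ≤ 0 := by
    refine sum_nonpos fun i _ => sum_nonpos fun j _ => sum_nonpos fun s hs => ?_
    refine orderWeight_cyclic_nonpos fun ⟨hsi, hij⟩ => ?_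
    exact disjoint_left.1 (hdisj i j) (mem_blkM_of_blockIdx_eq hsi.symm (hsi.trans hij)) hs
  have hsum : ∑ i, ∑ j, ∑ s ∈ N i j,
      (orderWeight (cls i) (cls s) + orderWeight (cls s) (cls j) + orderWeight (cls j) (cls i))
        = k • E + k • E + k • E := by
    simp only [sum_add_distrib, hN.sum_weight_row_symbol, hN.sum_weight_symbol_col,
      hN.sum_weight_col_row]
    rw [sum_comm (f := fun j s => orderWeight (cls s) (cls j)), hE]
  have hpos : 0 < E := sq_add_sq_add_sq_sub_pos (by exact_mod_cast hne)
  have : 0 < k • E := nsmul_pos hpos hk.ne'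
  linarith

theorem stmt_17_general (a b c n : ℕ)
    (hne : ¬(a = b ∧ b = c)) (hn : n = a + b + c) (k : ℕ) (hk : 1 ≤ k) :
    ¬ ∃ P : Fin n → Fin n → Finset (Fin n),
        IsArray2 n (n - k) P ∧ ∀ i j : Fin n, blkM n a b i j ⊆ P i j := by
  subst hn
  rintro ⟨P, hP, hsub⟩
  exact hne <| eq_and_eq_of_isArray2_disjoint_blkM hP.compl (by omega)
    fun i j => disjoint_compl_right_iff.2 (hsub i j)

/-- With n = a+b+c, a,b,c positive and not all equal, the block-diagonal array M
cannot be embedded in an (n², n−k)-array for any k ≥ 1: there is no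
(n², n−k)-array P with M[i,j] ⊆ P[i,j] for all i, j. -/
theorem stmt_17 (a b c n : ℕ) (ha : 0 < a) (hb : 0 < b) (hc : 0 < c)
    (hne : ¬(a = b ∧ b = c)) (hn : n = a + b + c) (k : ℕ) (hk : 1 ≤ k) :
    ¬ ∃ P : Fin n → Fin n → Finset (Fin n),
        IsArray2 n (n - k) P ∧ ∀ i j : Fin n, blkM n a b i j ⊆ P i j :=
  stmt_17_general a b c n hne hn k hk
end
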